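/- Let R be a commutative ring, and let {·,·} : R × R → R be a bilinear map that is antisymmetric and satisfies the Leibniz rule in each argument. Let ℓ ∈ M_n(R), and let a, b, c, d ∈ M_n(R) ⊗ M_n(R) be matrices all of whose entries are Poisson-central (i.e., {entry, x} = 0 for every x ∈ R). Suppose that the brackets of the entries of ℓ are given by the quadratic form: for all indices, {ℓ_{ij}, ℓ_{kl}} equals the ((i,k),(j,l)) entry of a·ℓ₁ℓ₂ + ℓ₁·b·ℓ₂ − ℓ₂·c·ℓ₁ − ℓ₁ℓ₂·d, where ℓ₁ = ℓ⊗𝟙 and ℓ₂ = 𝟙⊗ℓ. If a + b = c + d, then {Tr(ℓ^m), Tr(ℓ^k)} = 0 for all integers m, k ≥ 1. -/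
import Mathlib


open Matrix Kronecker

section Aux
variable {R : Type*} [CommRing R] {n : ℕ}

lemma der0 (D : R → R) (Dadd : ∀ x y, D (x+y) = D x + D y) : D 0 = 0 := by
  have h : D 0 = D 0 + D 0 := by simpa using (Dadd 0 0).symm
  exact (left_eq_add.mp h)

lemma der1 (D : R → R) (Dadd : ∀ x y, D (x+y) = D x + D y)
    (Dmul : ∀ x y, D (x*y) = x * D y + D x * y) : D 1 = 0 := by
  have h : D 1 = D 1 + D 1 := by simpa using (Dmul 1 1).symm
  exact (left_eq_add.mp h)

lemma der_sum (D : R → R) (Dadd : ∀ x y, D (x+y) = D x + D y)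
    {ι : Type*} (s : Finset ι) (f : ι → R) :
    D (∑ i ∈ s, f i) = ∑ i ∈ s, D (f i) :=
  map_sum (AddMonoidHom.mk' D Dadd) f s

lemma der_pow_entry (D : R → R) (Dadd : ∀ x y, D (x+y) = D x + D y)
    (Dmul : ∀ x y, D (x*y) = x * D y + D x * y)
    (ℓ : Matrix (Fin n) (Fin n) R) :
    ∀ (k : ℕ) (i j : Fin n), D ((ℓ^k) i j) =
      ∑ α ∈ Finset.range k, ∑ p, ∑ q, (ℓ^α) i p * D (ℓ p q) * (ℓ^(k-α-1)) q j := by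
  intro k
  induction k with
  | zero =>
    intro i j
    simp only [pow_zero, Matrix.one_apply]
    by_cases h : i = j <;> simp [h, der0 D Dadd, der1 D Dadd Dmul]
  | succ k ih =>
    intro i j
    rw [pow_succ, Matrix.mul_apply, der_sum D Dadd]
    have step : ∀ x, D ((ℓ^k) i x * ℓ x j)
        = (ℓ^k) i x * D (ℓ x j) + D ((ℓ^k) i x) * ℓ x j := fun x => Dmul _ _
    simp only [step, Finset.sum_add_distrib]
    rw [Finset.sum_range_succ]
    have last : ∑ p, ∑ q, (ℓ^k) i p * D (ℓ p q) * (ℓ^(k+1-k-1)) q j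
        = ∑ x, (ℓ^k) i x * D (ℓ x j) := by
      simp [Matrix.one_apply, Finset.mul_sum, mul_ite]
    rw [last]
    have main : ∑ x, D ((ℓ^k) i x) * ℓ x j
        = ∑ α ∈ Finset.range k, ∑ p, ∑ q, (ℓ^α) i p * D (ℓ p q) * (ℓ^(k+1-α-1)) q j := by
      simp only [ih, Finset.sum_mul]
      rw [Finset.sum_comm]
      refine Finset.sum_congr rfl (fun α hα => ?_)
      rw [Finset.sum_comm]
      refine Finset.sum_congr rfl (fun p _ => ?_)
      rw [Finset.sum_comm]
      refine Finset.sum_congr rfl (fun q _ => ?_)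
      have hk : k + 1 - α - 1 = (k - α - 1) + 1 := by
        have := Finset.mem_range.mp hα; omega
      rw [hk, pow_succ, Matrix.mul_apply, Finset.mul_sum]
      exact Finset.sum_congr rfl (fun x _ => by ring)
    rw [main]
    ring
end Aux

section Aux2
variable {R : Type*} [CommRing R] {n : ℕ}

lemma der_pow_trace (D : R → R) (Dadd : ∀ x y, D (x+y) = D x + D y)
    (Dmul : ∀ x y, D (x*y) = x * D y + D x * y)
    (ℓ : Matrix (Fin n) (Fin n) R) (k : ℕ) (hk : 1 ≤ k) :
    D ((ℓ^k).trace) = k • ∑ p, ∑ q, (ℓ^(k-1)) q p * D (ℓ p q) := by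
  rw [Matrix.trace]
  unfold Matrix.diag
  rw [der_sum D Dadd]
  have h1 : ∀ i : Fin n, D ((ℓ^k) i i) =
      ∑ α ∈ Finset.range k, ∑ p, ∑ q, (ℓ^α) i p * D (ℓ p q) * (ℓ^(k-α-1)) q i :=
    fun i => der_pow_entry D Dadd Dmul ℓ k i i
  simp only [h1]
  rw [Finset.sum_comm]
  have h2 : ∀ α ∈ Finset.range k,
      (∑ i, ∑ p, ∑ q, (ℓ^α) i p * D (ℓ p q) * (ℓ^(k-α-1)) q i)
      = ∑ p, ∑ q, (ℓ^(k-1)) q p * D (ℓ p q) := by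
    intro α hα
    rw [Finset.sum_comm]
    refine Finset.sum_congr rfl (fun p _ => ?_)
    rw [Finset.sum_comm]
    refine Finset.sum_congr rfl (fun q _ => ?_)
    have hpow : (ℓ^(k-1)) q p = ∑ i, (ℓ^(k-α-1)) q i * (ℓ^α) i p := by
      have : k - 1 = (k - α - 1) + α := by
        have := Finset.mem_range.mp hα; omega
      rw [this, pow_add, Matrix.mul_apply]
    rw [hpow, Finset.sum_mul]
    exact Finset.sum_congr rfl (fun i _ => by ring)
  rw [Finset.sum_congr rfl h2, Finset.sum_const, Finset.card_range]
end Aux2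

section Aux3
variable {R : Type*} [CommRing R] {n : ℕ}

lemma trace_kron (A B : Matrix (Fin n) (Fin n) R)
    (M : Matrix (Fin n × Fin n) (Fin n × Fin n) R) :
    ∑ p, ∑ q, ∑ r, ∑ s, A q p * B s r * M (p,r) (q,s) = ((A ⊗ₖ B) * M).trace := by
  rw [Matrix.trace]
  unfold Matrix.diag
  simp only [Matrix.mul_apply, Matrix.kroneckerMap_apply, Fintype.sum_prod_type]
  rw [Finset.sum_comm]
  refine Finset.sum_congr rfl (fun q _ => ?_)
  rw [show (∑ p, ∑ r, ∑ s : Fin n, A q p * B s r * M (p,r) (q,s))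
      = ∑ p, ∑ s, ∑ r : Fin n, A q p * B s r * M (p,r) (q,s) from
    Finset.sum_congr rfl (fun p _ => Finset.sum_comm)]
  rw [Finset.sum_comm]
end Aux3

section Aux4
variable {R : Type*} [CommRing R] {n : ℕ}

lemma tr3 {I : Type*} [Fintype I] [DecidableEq I] (X Y Z : Matrix I I R) :
    (X * (Y * Z)).trace = (Z * X * Y).trace := by
  rw [← mul_assoc, Matrix.trace_mul_comm, ← mul_assoc]

lemma tr4 {I : Type*} [Fintype I] [DecidableEq I] (X Y Z W : Matrix I I R) :
    (X * (Y * Z * W)).trace = (W * X * Y * Z).trace := by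
  rw [← mul_assoc, Matrix.trace_mul_comm, ← mul_assoc, ← mul_assoc]

lemma key (ℓ : Matrix (Fin n) (Fin n) R) (m' k' : ℕ)
    (a b c d : Matrix (Fin n × Fin n) (Fin n × Fin n) R) :
    (((ℓ^m') ⊗ₖ (ℓ^k')) *
      (a * (ℓ ⊗ₖ (1 : Matrix (Fin n) (Fin n) R)) * ((1 : Matrix (Fin n) (Fin n) R) ⊗ₖ ℓ)
       + (ℓ ⊗ₖ (1 : Matrix (Fin n) (Fin n) R)) * b * ((1 : Matrix (Fin n) (Fin n) R) ⊗ₖ ℓ)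
       - ((1 : Matrix (Fin n) (Fin n) R) ⊗ₖ ℓ) * c * (ℓ ⊗ₖ (1 : Matrix (Fin n) (Fin n) R))
       - (ℓ ⊗ₖ (1 : Matrix (Fin n) (Fin n) R)) * ((1 : Matrix (Fin n) (Fin n) R) ⊗ₖ ℓ) * d)).trace
    = (((ℓ^(m'+1)) ⊗ₖ (ℓ^(k'+1))) * (a + b - c - d)).trace := by
  set X := (ℓ^m') ⊗ₖ (ℓ^k') with hX
  set K := (ℓ^(m'+1)) ⊗ₖ (ℓ^(k'+1)) with hK
  set L1 := ℓ ⊗ₖ (1 : Matrix (Fin n) (Fin n) R) with hL1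
  set L2 := (1 : Matrix (Fin n) (Fin n) R) ⊗ₖ ℓ with hL2
  have h1 : (X * (a * L1 * L2)).trace = (K * a).trace := by
    rw [mul_assoc a, tr3, hX, hK, hL1, hL2]
    simp only [← Matrix.mul_kronecker_mul, one_mul, mul_one, ← pow_succ']
  have h2 : (X * (L1 * b * L2)).trace = (K * b).trace := by
    rw [tr4, hX, hK, hL1, hL2]
    simp only [← Matrix.mul_kronecker_mul, one_mul, mul_one, ← pow_succ', ← pow_succ]
  have h3 : (X * (L2 * c * L1)).trace = (K * c).trace := by
    rw [tr4, hX, hK, hL1, hL2]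
    simp only [← Matrix.mul_kronecker_mul, one_mul, mul_one, ← pow_succ', ← pow_succ]
  have h4 : (X * (L1 * L2 * d)).trace = (K * d).trace := by
    rw [← mul_assoc, ← mul_assoc, hX, hK, hL1, hL2]
    simp only [← Matrix.mul_kronecker_mul, one_mul, mul_one, ← pow_succ]
  rw [mul_sub, mul_sub, mul_add, mul_sub, mul_sub, mul_add,
    Matrix.trace_sub, Matrix.trace_sub, Matrix.trace_add,
    Matrix.trace_sub, Matrix.trace_sub, Matrix.trace_add, h1, h2, h3, h4]
end Aux4

/-- trace involution for the general quadratic r-matrix Poisson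
bracket: if the brackets of the entries of `ℓ` are given by the quadratic form
`a ℓ₁ℓ₂ + ℓ₁ b ℓ₂ − ℓ₂ c ℓ₁ − ℓ₁ℓ₂ d` with Poisson-central structure matrices
`a, b, c, d` satisfying `a + b = c + d`, then the traces `Tr(ℓ^m)` mutually
Poisson-commute. -/
theorem stmt12 (R : Type*) [CommRing R]
    (br : R → R → R)
    (br_add_left : ∀ x y z : R, br (x + y) z = br x z + br y z)
    (br_add_right : ∀ x y z : R, br x (y + z) = br x y + br x z)
    (br_anti : ∀ x y : R, br x y = - br y x)
    (br_leibniz_right : ∀ x y z : R, br x (y * z) = y * br x z + br x y * z)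
    (br_leibniz_left : ∀ x y z : R, br (x * y) z = x * br y z + br x z * y)
    (n : ℕ) (ℓ : Matrix (Fin n) (Fin n) R)
    (a b c d : Matrix (Fin n × Fin n) (Fin n × Fin n) R)
    (ha_central : ∀ i j, ∀ x : R, br (a i j) x = 0)
    (hb_central : ∀ i j, ∀ x : R, br (b i j) x = 0)
    (hc_central : ∀ i j, ∀ x : R, br (c i j) x = 0)
    (hd_central : ∀ i j, ∀ x : R, br (d i j) x = 0)
    (ℓ₁ ℓ₂ : Matrix (Fin n × Fin n) (Fin n × Fin n) R)
    (hℓ₁ : ℓ₁ = ℓ ⊗ₖ (1 : Matrix (Fin n) (Fin n) R))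
    (hℓ₂ : ℓ₂ = (1 : Matrix (Fin n) (Fin n) R) ⊗ₖ ℓ)
    (hquad : ∀ i j k l : Fin n,
      br (ℓ i j) (ℓ k l)
        = (a * ℓ₁ * ℓ₂ + ℓ₁ * b * ℓ₂ - ℓ₂ * c * ℓ₁ - ℓ₁ * ℓ₂ * d) (i, k) (j, l))
    (habcd : a + b = c + d) :
    ∀ m k : ℕ, 1 ≤ m → 1 ≤ k → br ((ℓ ^ m).trace) ((ℓ ^ k).trace) = 0 := by
  intro m k hm hk
  obtain ⟨m', rfl⟩ : ∃ m', m = m' + 1 := ⟨m - 1, by omega⟩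
  obtain ⟨k', rfl⟩ : ∃ k', k = k' + 1 := ⟨k - 1, by omega⟩
  have hD1add : ∀ x y : R, br (x + y) ((ℓ ^ (k'+1)).trace)
      = br x ((ℓ ^ (k'+1)).trace) + br y ((ℓ ^ (k'+1)).trace) :=
    fun x y => br_add_left x y _
  have hD1mul : ∀ x y : R, br (x * y) ((ℓ ^ (k'+1)).trace)
      = x * br y ((ℓ ^ (k'+1)).trace) + br x ((ℓ ^ (k'+1)).trace) * y :=
    fun x y => br_leibniz_left x y _
  rw [der_pow_trace (fun x => br x ((ℓ ^ (k'+1)).trace)) hD1add hD1mul ℓ (m'+1) (by omega)]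
  have inner : ∀ p q : Fin n, br (ℓ p q) ((ℓ ^ (k'+1)).trace)
      = (k'+1) • ∑ r, ∑ s, (ℓ^(k'+1-1)) s r * br (ℓ p q) (ℓ r s) :=
    fun p q => der_pow_trace (fun x => br (ℓ p q) x)
      (fun x y => br_add_right _ x y) (fun x y => br_leibniz_right _ x y) ℓ (k'+1) (by omega)
  simp only [inner, Nat.add_sub_cancel, mul_smul_comm]
  simp only [← Finset.smul_sum]
  have main : ∑ p, ∑ q, ∑ r, ∑ s,
      (ℓ^m') q p * ((ℓ^k') s r * br (ℓ p q) (ℓ r s)) = 0 := by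
    simp only [hquad, ← mul_assoc]
    rw [trace_kron]
    rw [hℓ₁, hℓ₂, key]
    have h0 : a + b - c - d = 0 := by rw [habcd]; abel
    rw [h0, mul_zero, Matrix.trace_zero]
  rw [show ∑ p, ∑ q, (ℓ ^ m') q p * ∑ r, ∑ s, (ℓ ^ k') s r * br (ℓ p q) (ℓ r s)
      = ∑ p, ∑ q, ∑ r, ∑ s, (ℓ^m') q p * ((ℓ^k') s r * br (ℓ p q) (ℓ r s)) from by
    simp only [Finset.mul_sum]]
  rw [main, smul_zero, smul_zero]
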